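/- arXiv:2303.04348 — 2 statements merged into one kernel-verified Lean document; each statement's English description precedes it below -/
import Mathlib

section
/- Let X be a compact Hausdorff topological space, let X₀ be a dense subset of X, and let A be a uniformly bounded set of continuous real-valued functions on X. Suppose the double limit condition holds relative to X₀: for every sequence (f_m) in A and every sequence (x_n) in X₀, whenever both iterated limits lim_n lim_m f_m(x_n) and lim_m lim_n f_m(x_n) exist, they are equal. Then the double limit condition also holds relative to all of X: for every sequence (f_m) in A and every sequence (y_n) of points of X, whenever both iterated limits lim_n lim_m f_m(y_n) and lim_m lim_n f_m(y_n) exist, they are equal. -/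
open Filter Topology

/-!
Since the `f m` are countably many continuous functions, each `y n` is approximated by a sequence
in `X₀` along which every `f m` converges to `f m (y n)`. By uniform boundedness, a diagonal
subsequence of `(f m)` converges at all of these countably many points. For fixed `n`, the
condition on `X₀` applied to the approximants of `y n` shows that `c n` is a cluster point of
the limits at those approximants, so a diagonal choice of one approximant per `n` gives a
sequence in `X₀` with the same iterated limits `r` and `s` as `(y n)`, to which the condition on
`X₀` applies once more.
-/

def DoubleLimitCondition {X : Type*} (A : Set (X → ℝ)) (S : Set X) : Prop :=
  ∀ (f : ℕ → X → ℝ), (∀ m, f m ∈ A) → ∀ (x : ℕ → X), (∀ n, x n ∈ S) →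
    ∀ (c d : ℕ → ℝ) (r s : ℝ),
      (∀ n, Tendsto (fun m => f m (x n)) atTop (𝓝 (c n))) → Tendsto c atTop (𝓝 r) →
      (∀ m, Tendsto (fun n => f m (x n)) atTop (𝓝 (d m))) → Tendsto d atTop (𝓝 s) → r = s

theorem exists_seq_mem_forall_tendsto_of_mem_closure {X Y ι : Type*} [TopologicalSpace X]
    [TopologicalSpace Y] [FirstCountableTopology Y] [Countable ι] {f : ι → X → Y}
    (hf : ∀ i, Continuous (f i)) {S : Set X} {y : X} (hy : y ∈ closure S) :
    ∃ z : ℕ → X, (∀ p, z p ∈ S) ∧ ∀ i, Tendsto (fun p => f i (z p)) atTop (𝓝 (f i y)) := by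
  have hF : Continuous fun x i => f i x := continuous_pi hf
  obtain ⟨v, hvS, hv⟩ := mem_closure_iff_seq_limit.1 (mem_closure_image hF.continuousAt hy)
  choose z hzS hzv using hvS
  exact ⟨z, hzS, fun i => (tendsto_pi_nhds.1 hv i).congr fun p => by rw [← hzv p]⟩

theorem IsCompact.exists_subseq_forall_tendsto {Y ι : Type*} [TopologicalSpace Y]
    [FirstCountableTopology Y] [Countable ι] {K : Set Y} (hK : IsCompact K) {u : ℕ → ι → Y}
    (hu : ∀ k i, u k i ∈ K) :
    ∃ g : ι → Y, (∀ i, g i ∈ K) ∧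
      ∃ φ : ℕ → ℕ, StrictMono φ ∧ ∀ i, Tendsto (fun k => u (φ k) i) atTop (𝓝 (g i)) := by
  obtain ⟨g, hg, φ, hφ, hu⟩ :=
    (isCompact_univ_pi fun _ : ι => hK).tendsto_subseq fun k => Set.mem_univ_pi.2 (hu k)
  exact ⟨g, Set.mem_univ_pi.1 hg, φ, hφ, tendsto_pi_nhds.1 hu⟩

theorem tendsto_of_dist_lt_one_div_succ {α : Type*} [PseudoMetricSpace α] {a b : ℕ → α} {L : α}
    (ha : Tendsto a atTop (𝓝 L)) (h : ∀ᶠ n in atTop, dist (b n) (a n) < 1 / ((n : ℝ) + 1)) :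
    Tendsto b atTop (𝓝 L) :=
  ha.congr_dist <| squeeze_zero' (.of_forall fun _ => dist_nonneg)
    (h.mono fun _ hn => (dist_comm _ _).trans_le hn.le) tendsto_one_div_add_atTop_nhds_zero_nat

namespace DoubleLimitCondition

variable {X : Type*} {A : Set (X → ℝ)} {S : Set X}

theorem mapClusterPt (hS : DoubleLimitCondition A S) {K : Set ℝ} (hK : IsCompact K)
    {f : ℕ → X → ℝ} (hf : ∀ m, f m ∈ A) {x : ℕ → X} (hx : ∀ p, x p ∈ S) {g : ℕ → ℝ}
    (hgK : ∀ p, g p ∈ K) (hg : ∀ p, Tendsto (fun m => f m (x p)) atTop (𝓝 (g p)))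
    {e : ℕ → ℝ} {c : ℝ} (he : ∀ m, Tendsto (fun p => f m (x p)) atTop (𝓝 (e m)))
    (hec : Tendsto e atTop (𝓝 c)) : MapClusterPt c atTop g := by
  obtain ⟨a, -, ψ, hψ, hgψ⟩ := hK.tendsto_subseq hgK
  have hac : a = c := hS f hf (x ∘ ψ) (fun p => hx (ψ p)) (g ∘ ψ) e a c (fun p => hg (ψ p)) hgψ
    (fun m => (he m).comp hψ.tendsto_atTop) hec
  exact MapClusterPt.of_comp hψ.tendsto_atTop (hac ▸ hgψ).mapClusterPt

variable [TopologicalSpace X]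

theorem closure (hS : DoubleLimitCondition A S) (hcont : ∀ f ∈ A, Continuous f) {C : ℝ}
    (hbd : ∀ f ∈ A, ∀ x, |f x| ≤ C) : DoubleLimitCondition A (closure S) := by
  intro f hf y hy c d r s hc hcr hd hds
  choose z hzS hz using fun n => exists_seq_mem_forall_tendsto_of_mem_closure
    (fun m => hcont _ (hf m)) (hy n)
  obtain ⟨g, hgK, φ, hφ, hg⟩ := (isCompact_Icc (a := -C) (b := C)).exists_subseq_forall_tendsto
    (u := fun k (np : ℕ × ℕ) => f k (z np.1 np.2)) fun k _ => abs_le.1 (hbd _ (hf k) _)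
  have hcluster : ∀ n, MapClusterPt (c n) atTop fun p => g (n, p) := fun n =>
    hS.mapClusterPt isCompact_Icc (fun k => hf (φ k)) (hzS n) (fun p => hgK (n, p))
      (fun p => hg (n, p)) (fun k => hz n (φ k)) ((hc n).comp hφ.tendsto_atTop)
  have hp : ∀ n, ∃ p, dist (g (n, p)) (c n) < 1 / ((n : ℝ) + 1) ∧
      ∀ m ∈ Set.Iic n, dist (f m (z n p)) (f m (y n)) < 1 / ((n : ℝ) + 1) := by
    intro n
    have hε : (0 : ℝ) < 1 / ((n : ℝ) + 1) := Nat.one_div_pos_of_nat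
    have hnear : ∀ᶠ p in atTop, ∀ m ∈ Set.Iic n, dist (f m (z n p)) (f m (y n)) < 1 / (n + 1) :=
      (Set.finite_Iic n).eventually_all.2 fun m _ => (hz n m).eventually (Metric.ball_mem_nhds _ hε)
    exact ((hcluster n).frequently (Metric.ball_mem_nhds _ hε)).and_eventually hnear |>.exists
  choose p hpc hpf using hp
  refine hS (f ∘ φ) (fun k => hf (φ k)) (fun n => z n (p n)) (fun n => hzS n (p n))
    (fun n => g (n, p n)) (d ∘ φ) r s (fun n => hg (n, p n)) ?_ (fun k => ?_)
    (hds.comp hφ.tendsto_atTop)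
  · exact tendsto_of_dist_lt_one_div_succ hcr (.of_forall hpc)
  · exact tendsto_of_dist_lt_one_div_succ (hd (φ k))
      ((eventually_ge_atTop (φ k)).mono fun n hn => hpf n (φ k) hn)

end DoubleLimitCondition

theorem double_limit_dense_to_global_general {X : Type*} [TopologicalSpace X]
    (X₀ : Set X) (hX₀ : Dense X₀)
    (A : Set (X → ℝ)) (hcont : ∀ f ∈ A, Continuous f)
    (C : ℝ) (hbd : ∀ f ∈ A, ∀ x, |f x| ≤ C)
    (hdl : ∀ (f : ℕ → X → ℝ), (∀ m, f m ∈ A) →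
        ∀ (x : ℕ → X), (∀ n, x n ∈ X₀) →
        ∀ (c d : ℕ → ℝ) (r s : ℝ),
          (∀ n, Tendsto (fun m => f m (x n)) atTop (𝓝 (c n))) →
          Tendsto c atTop (𝓝 r) →
          (∀ m, Tendsto (fun n => f m (x n)) atTop (𝓝 (d m))) →
          Tendsto d atTop (𝓝 s) →
          r = s) :
    ∀ (f : ℕ → X → ℝ), (∀ m, f m ∈ A) →
      ∀ (y : ℕ → X),
      ∀ (c d : ℕ → ℝ) (r s : ℝ),
        (∀ n, Tendsto (fun m => f m (y n)) atTop (𝓝 (c n))) →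
        Tendsto c atTop (𝓝 r) →
        (∀ m, Tendsto (fun n => f m (y n)) atTop (𝓝 (d m))) →
        Tendsto d atTop (𝓝 s) →
        r = s := by
  intro f hf y
  have hglobal := DoubleLimitCondition.closure hdl hcont hbd
  rw [hX₀.closure_eq] at hglobal
  exact hglobal f hf y fun _ => Set.mem_univ _

/-- Upgrade of the double limit condition from a dense subset `X₀` to the whole
compact Hausdorff space `X`, for a uniformly bounded family `A` of continuous
functions. -/
theorem double_limit_dense_to_global {X : Type*} [TopologicalSpace X] [CompactSpace X]
    [T2Space X]
    (X₀ : Set X) (hX₀ : Dense X₀)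
    (A : Set (X → ℝ)) (hcont : ∀ f ∈ A, Continuous f)
    (C : ℝ) (hbd : ∀ f ∈ A, ∀ x, |f x| ≤ C)
    (hdl : ∀ (f : ℕ → X → ℝ), (∀ m, f m ∈ A) →
        ∀ (x : ℕ → X), (∀ n, x n ∈ X₀) →
        ∀ (c d : ℕ → ℝ) (r s : ℝ),
          (∀ n, Tendsto (fun m => f m (x n)) atTop (𝓝 (c n))) →
          Tendsto c atTop (𝓝 r) →
          (∀ m, Tendsto (fun n => f m (x n)) atTop (𝓝 (d m))) →
          Tendsto d atTop (𝓝 s) →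
          r = s) :
    ∀ (f : ℕ → X → ℝ), (∀ m, f m ∈ A) →
      ∀ (y : ℕ → X),
      ∀ (c d : ℕ → ℝ) (r s : ℝ),
        (∀ n, Tendsto (fun m => f m (y n)) atTop (𝓝 (c n))) →
        Tendsto c atTop (𝓝 r) →
        (∀ m, Tendsto (fun n => f m (y n)) atTop (𝓝 (d m))) →
        Tendsto d atTop (𝓝 s) →
        r = s :=
  double_limit_dense_to_global_general X₀ hX₀ A hcont C hbd hdl
end

section
/- Let X be a compact Hausdorff topological space, let X₀ be a dense subset of X, and let A be a uniformly bounded set of continuous real-valued functions on X. Suppose g : X → ℝ lies in the closure of A in the product topology on ℝ^X and g is discontinuous at some point of X. Then there exist a sequence (f_m) of elements of A, a sequence (x_n) of points of X₀, and real numbers r ≠ s such that: for every n, lim_m f_m(x_n) = g(x_n); lim_n g(x_n) = r; for every m, the limit d(m) = lim_n f_m(x_n) exists; and lim_m d(m) = s. In particular both iterated limits exist and are distinct. -/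
open Filter Topology

/-! If `g` is discontinuous, then at some point `p` its restriction to the dense set `X₀` does
not tend to `g p`: the points `z ∈ X₀` with `δ ≤ |g z - g p|` accumulate at `p`. Alternately pick
`f m ∈ A` within `1/(m+1)` of `g` at `p` and at the earlier points, and a point `x n` of that kind
at which each earlier `f m` is within `1/(n+1)` of `f m p` (possible by continuity of `f m`).
Then `f m (x n) → g (x n)` as `m → ∞` and `f m (x n) → f m p → g p` as `n → ∞`, whereas a
subsequence of the bounded values `g (x n)` converges to some `r` at distance at least `δ`
from `g p`. -/

theorem Dense.continuous_of_forall_tendsto_nhdsWithin {X Y : Type*} [TopologicalSpace X]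
    [TopologicalSpace Y] [T3Space Y] {s : Set X} (hs : Dense s) {f : X → Y}
    (hf : ∀ x, Tendsto f (𝓝[s] x) (𝓝 (f x))) : Continuous f := by
  have hext : extendFrom s f = f := funext fun x => extendFrom_eq (hs x) (hf x)
  exact hext ▸ continuous_extendFrom hs fun x => ⟨f x, hf x⟩

theorem Dense.exists_mem_closure_le_dist_of_not_continuous {X Y : Type*} [TopologicalSpace X]
    [MetricSpace Y] {s : Set X} (hs : Dense s) {f : X → Y} (hf : ¬ Continuous f) :
    ∃ p, ∃ δ > 0, p ∈ closure (s ∩ {z | δ ≤ dist (f z) (f p)}) := by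
  by_contra! h
  refine hf (hs.continuous_of_forall_tendsto_nhdsWithin fun p => ?_)
  refine Metric.tendsto_nhds.2 fun δ hδ => eventually_nhdsWithin_iff.2 ?_
  have hfar := h p δ hδ
  rw [mem_closure_iff_frequently, not_frequently] at hfar
  filter_upwards [hfar] with z hz hzs
  simpa [hzs] using hz

theorem exists_mem_forall_dist_lt_of_mem_closure {Y ι E : Type*} [TopologicalSpace Y]
    [PseudoMetricSpace E] {S : Set Y} {y : Y} (hy : y ∈ closure S) (t : Finset ι)
    {φ : ι → Y → E} (hφ : ∀ i ∈ t, ContinuousAt (φ i) y) {ε : ℝ} (hε : 0 < ε) :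
    ∃ z ∈ S, ∀ i ∈ t, dist (φ i z) (φ i y) < ε := by
  have hnear : ∀ᶠ z in 𝓝 y, ∀ i ∈ t, dist (φ i z) (φ i y) < ε :=
    (eventually_all_finset t).2 fun i hi => Metric.tendsto_nhds.1 (hφ i hi) ε hε
  exact ((mem_closure_iff_frequently.1 hy).and_eventually hnear).exists

theorem forall_apply_mem_of_mem_closure {X E : Type*} [TopologicalSpace E] {A : Set (X → E)}
    {K : Set E} (hK : IsClosed K) (hA : ∀ f ∈ A, ∀ x, f x ∈ K) {g : X → E} (hg : g ∈ closure A)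
    (x : X) : g x ∈ K :=
  Set.mem_univ_pi.1
    (closure_minimal (fun f hf => Set.mem_univ_pi.2 (hA f hf)) (isClosed_set_pi fun _ _ => hK) hg) x

theorem exists_seq_of_forall_finset_exists_of_antitone {α : Type*} (P : α → Prop)
    (r : ℕ → α → α → Prop) (hr : Antitone r)
    (h : ∀ k (s : Finset α), (∀ a ∈ s, P a) → ∃ b, P b ∧ ∀ a ∈ s, r k a b) :
    ∃ u : ℕ → α, (∀ n, P (u n)) ∧ ∀ m n, m < n → r n (u m) (u n) := by
  classical
  -- Tagging each term with its stage makes the stages strictly increasing, so stage `n` is `≥ n`.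
  obtain ⟨c, hPc, hrc⟩ := exists_seq_of_forall_finset_exists (fun c : ℕ × α => P c.2)
    (fun c c' => c.1 < c'.1 ∧ r c'.1 c.2 c'.2) fun s hs => by
      obtain ⟨b, hPb, hrb⟩ := h ((s.sup Prod.fst) + 1) (s.image Prod.snd)
        (by simpa using fun a k hka => hs (k, a) hka)
      exact ⟨((s.sup Prod.fst) + 1, b), hPb, fun c hc =>
        ⟨Nat.lt_succ_of_le (Finset.le_sup hc), hrb c.2 (Finset.mem_image_of_mem _ hc)⟩⟩
  have hmono : StrictMono fun n => (c n).1 :=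
    strictMono_nat_of_lt_succ fun n => (hrc n (n + 1) n.lt_succ_self).1
  exact ⟨fun n => (c n).2, hPc, fun m n hmn => hr hmono.le_apply _ _ (hrc m n hmn).2⟩

theorem tendsto_of_eventually_dist_lt_one_div {E : Type*} [PseudoMetricSpace E] {u : ℕ → E}
    {a : E} (h : ∀ᶠ n in atTop, dist (u n) a < 1 / (n + 1)) : Tendsto u atTop (𝓝 a) :=
  tendsto_iff_dist_tendsto_zero.2 <| squeeze_zero' (Eventually.of_forall fun _ => dist_nonneg)
    (h.mono fun _ => le_of_lt) tendsto_one_div_add_atTop_nhds_zero_nat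

theorem exists_seq_tendsto_apply_seq_of_mem_closure {X E : Type*} [TopologicalSpace X]
    [PseudoMetricSpace E] {A : Set (X → E)} {g : X → E} (hg : g ∈ closure A) {S : Set X} {p : X}
    (hp : p ∈ closure S) (hA : ∀ f ∈ A, ContinuousAt f p) :
    ∃ (f : ℕ → X → E) (x : ℕ → X), (∀ m, f m ∈ A) ∧ (∀ n, x n ∈ S) ∧
      (∀ n, Tendsto (fun m => f m (x n)) atTop (𝓝 (g (x n)))) ∧
      (∀ m, Tendsto (fun n => f m (x n)) atTop (𝓝 (f m p))) ∧
      Tendsto (fun m => f m p) atTop (𝓝 (g p)) := by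
  classical
  let r (k : ℕ) (a b : (X → E) × X) : Prop :=
    dist (b.1 a.2) (g a.2) < 1 / (k + 1) ∧ dist (a.1 b.2) (a.1 p) < 1 / (k + 1) ∧
      dist (b.1 p) (g p) < 1 / (k + 1)
  have hr : Antitone r := fun k l hkl a b h => by
    have hε : (1 : ℝ) / (l + 1) ≤ 1 / (k + 1) := Nat.one_div_le_one_div hkl
    exact ⟨h.1.trans_le hε, h.2.1.trans_le hε, h.2.2.trans_le hε⟩
  obtain ⟨u, hPu, hru⟩ := exists_seq_of_forall_finset_exists_of_antitone
    (fun a => a.1 ∈ A ∧ a.2 ∈ S) r hr fun k s hs => by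
      have hε : (0 : ℝ) < 1 / (k + 1) := Nat.one_div_pos_of_nat
      obtain ⟨f, hfA, hf⟩ := exists_mem_forall_dist_lt_of_mem_closure hg
        (insert p (s.image Prod.snd)) (φ := fun q h => h q)
        (fun q _ => (continuous_apply q).continuousAt) hε
      obtain ⟨x, hxS, hx⟩ := exists_mem_forall_dist_lt_of_mem_closure hp s (φ := Prod.fst)
        (fun a ha => hA _ (hs a ha).1) hε
      exact ⟨(f, x), ⟨hfA, hxS⟩, fun a ha =>
        ⟨hf a.2 (Finset.mem_insert_of_mem (Finset.mem_image_of_mem _ ha)), hx a ha,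
          hf p (Finset.mem_insert_self _ _)⟩⟩
  refine ⟨fun m => (u m).1, fun n => (u n).2, fun m => (hPu m).1, fun n => (hPu n).2,
    fun n => ?_, fun m => ?_, ?_⟩ <;> apply tendsto_of_eventually_dist_lt_one_div
  · exact (eventually_gt_atTop n).mono fun m hm => (hru n m hm).1
  · exact (eventually_gt_atTop m).mono fun n hn => (hru m n hn).2.1
  · exact (eventually_gt_atTop 0).mono fun m hm => (hru 0 m hm).2.2

theorem exists_double_limit_violation_of_discontinuous_general {X : Type*} [TopologicalSpace X]
    (X₀ : Set X) (hX₀ : Dense X₀)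
    (A : Set (X → ℝ)) (hcont : ∀ f ∈ A, Continuous f)
    (C : ℝ) (hbd : ∀ f ∈ A, ∀ x, |f x| ≤ C)
    (g : X → ℝ) (hg : g ∈ closure A) (hdisc : ∃ x : X, ¬ ContinuousAt g x) :
    ∃ (f : ℕ → X → ℝ) (x : ℕ → X) (r s : ℝ),
      (∀ m, f m ∈ A) ∧ (∀ n, x n ∈ X₀) ∧ r ≠ s ∧
      (∀ n, Tendsto (fun m => f m (x n)) atTop (𝓝 (g (x n)))) ∧
      Tendsto (fun n => g (x n)) atTop (𝓝 r) ∧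
      ∃ d : ℕ → ℝ,
        (∀ m, Tendsto (fun n => f m (x n)) atTop (𝓝 (d m))) ∧
        Tendsto d atTop (𝓝 s) := by
  obtain ⟨p, δ, hδ, hp⟩ := hX₀.exists_mem_closure_le_dist_of_not_continuous fun h =>
    hdisc.elim fun x hx => hx h.continuousAt
  obtain ⟨f, x, hfA, hxS, h_col, h_row, h_diag⟩ :=
    exists_seq_tendsto_apply_seq_of_mem_closure hg hp fun f hf => (hcont f hf).continuousAt
  have hgx : ∀ n, g (x n) ∈ Set.Icc (-C) C := fun n =>
    forall_apply_mem_of_mem_closure isClosed_Icc (fun f hf y => abs_le.1 (hbd f hf y)) hg (x n)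
  obtain ⟨r, -, φ, hφ, hr⟩ := isCompact_Icc.tendsto_subseq hgx
  have hδr : δ ≤ dist r (g p) :=
    ge_of_tendsto (hr.dist tendsto_const_nhds) (Eventually.of_forall fun n => (hxS (φ n)).2)
  exact ⟨f, x ∘ φ, r, g p, hfA, fun n => (hxS (φ n)).1, dist_pos.1 (hδ.trans_le hδr),
    fun n => h_col (φ n), hr, fun m => f m p, fun m => (h_row m).comp hφ.tendsto_atTop, h_diag⟩

/-- Constructive content of the proof of Grothendieck's double limit theorem:
a discontinuous function in the pointwise closure of a uniformly bounded family `A`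
of continuous functions yields an explicit violation of the double limit condition,
with witnessing sequences from `A` and from the dense set `X₀`. -/
theorem exists_double_limit_violation_of_discontinuous {X : Type*} [TopologicalSpace X]
    [CompactSpace X] [T2Space X]
    (X₀ : Set X) (hX₀ : Dense X₀)
    (A : Set (X → ℝ)) (hcont : ∀ f ∈ A, Continuous f)
    (C : ℝ) (hbd : ∀ f ∈ A, ∀ x, |f x| ≤ C)
    (g : X → ℝ) (hg : g ∈ closure A) (hdisc : ∃ x : X, ¬ ContinuousAt g x) :
    ∃ (f : ℕ → X → ℝ) (x : ℕ → X) (r s : ℝ),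
      (∀ m, f m ∈ A) ∧ (∀ n, x n ∈ X₀) ∧ r ≠ s ∧
      (∀ n, Tendsto (fun m => f m (x n)) atTop (𝓝 (g (x n)))) ∧
      Tendsto (fun n => g (x n)) atTop (𝓝 r) ∧
      ∃ d : ℕ → ℝ,
        (∀ m, Tendsto (fun n => f m (x n)) atTop (𝓝 (d m))) ∧
        Tendsto d atTop (𝓝 s) :=
  exists_double_limit_violation_of_discontinuous_general X₀ hX₀ A hcont C hbd g hg hdisc
end
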